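/- Let q be a prime power, let K be a finite field with q elements, let L be a field extension of K of degree n, let d be a divisor of n, and let b be a positive divisor of q^n − 1. Then #{ β ∈ Lˣ : [K(β) : K] = d and β^{(q^n−1)/b} = 1 } = Σ_{c | d} μ̂(d/c) · (q^n − 1) / lcm( (q^n − 1)/(q^c − 1), b ), where μ̂ is the Möbius function and the lcm is computed in the integers. -/

import Mathlib

/-!
An element `β ∈ Lˣ` has `[K(β) : K] ∣ c` iff `β ^ (q ^ c - 1) = 1`, so the `β` with
`[K(β) : K] ∣ c` in the subgroup of index `b` are the roots of unity of order dividing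
`gcd (q ^ c - 1) ((q ^ n - 1) / b)` in the cyclic group `Lˣ`. There are exactly that many, and this
gcd equals `(q ^ n - 1) / lcm ((q ^ n - 1) / (q ^ c - 1)) b` when `c ∣ n`. Möbius inversion over the
divisors of `d` isolates the elements of degree exactly `d`.
-/

open IntermediateField

theorem IntermediateField.finrank_adjoin_simple_dvd_iff {K L : Type*} [Field K] [Finite K]
    [Field L] [Algebra K L] {x : L} (hx : IsIntegral K x) {c : ℕ} :
    Module.finrank K K⟮x⟯ ∣ c ↔ x ^ Nat.card K ^ c = x := by
  rw [adjoin.finrank hx,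
    (minpoly.irreducible hx).natDegree_dvd_iff_dvd_X_pow_card_pow_sub_X, minpoly.dvd_iff]
  simp [sub_eq_zero]

theorem Units.pow_sub_one_eq_one_iff {M : Type*} [Monoid M] (u : Mˣ) {m : ℕ} (hm : 1 ≤ m) :
    u ^ (m - 1) = 1 ↔ (u : M) ^ m = u := by
  rw [← Units.val_pow_eq_pow_val, Units.val_inj, ← Nat.sub_add_cancel hm, pow_succ, mul_eq_right,
    Nat.add_sub_cancel]

theorem IsCyclic.card_pow_eq_one {G : Type*} [CommGroup G] [IsCyclic G] [Finite G] (m : ℕ) :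
    Nat.card {x : G // x ^ m = 1} = (Nat.card G).gcd m :=
  IsCyclic.card_powMonoidHom_ker G m

theorem Nat.gcd_div_mul_lcm_div {N x b : ℕ} (hx : x ∣ N) (hb : b ∣ N) :
    x.gcd (N / b) * (N / x).lcm b = N := by
  rcases N.eq_zero_or_pos with rfl | hN
  · simp
  have hxb : 0 < x * b := Nat.mul_pos (Nat.pos_of_dvd_of_pos hx hN) (Nat.pos_of_dvd_of_pos hb hN)
  refine Nat.eq_of_mul_eq_mul_right hxb ?_
  calc x.gcd (N / b) * (N / x).lcm b * (x * b)
      = (x * b).gcd (N / b * b) * (N / x * x).lcm (b * x) := by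
        rw [Nat.gcd_mul_right, Nat.lcm_mul_right]; ring
    _ = (x * b).gcd N * (x * b).lcm N := by
        rw [Nat.div_mul_cancel hb, Nat.div_mul_cancel hx, Nat.lcm_comm, Nat.mul_comm b]
    _ = N * (x * b) := by rw [Nat.gcd_mul_lcm, Nat.mul_comm]

theorem Nat.sum_divisors_card_eq_card_dvd {α : Type*} [Finite α] (f : α → ℕ) (p : α → Prop)
    {c : ℕ} (hc : c ≠ 0) :
    ∑ i ∈ c.divisors, Nat.card {a // f a = i ∧ p a} = Nat.card {a // f a ∣ c ∧ p a} := by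
  classical
  have := Fintype.ofFinite α
  simp only [Nat.card_eq_fintype_card, Fintype.card_subtype]
  rw [Finset.card_eq_sum_card_fiberwise (f := f) (t := c.divisors)]
  · refine Finset.sum_congr rfl fun i hi => ?_
    rw [Finset.filter_filter]
    congr 1
    ext a
    grind
  · exact fun a ha => Nat.mem_divisors.mpr ⟨(Finset.mem_filter.mp ha).2.1, hc⟩

theorem card_eq_sum_moebius_of_card_dvd_eq {α R : Type*} [Finite α] [Ring R] (f : α → ℕ)
    (p : α → Prop) (g : ℕ → R) (hg : ∀ c > 0, (Nat.card {a // f a ∣ c ∧ p a} : R) = g c)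
    {d : ℕ} (hd : 0 < d) :
    (Nat.card {a // f a = d ∧ p a} : R) =
      ∑ c ∈ d.divisors, (ArithmeticFunction.moebius (d / c) : R) * g c := by
  rw [← Nat.sum_divisorsAntidiagonal' (fun i j => (ArithmeticFunction.moebius i : R) * g j)]
  refine ((ArithmeticFunction.sum_eq_iff_sum_mul_moebius_eq
    (f := fun i => (Nat.card {a // f a = i ∧ p a} : R)) (g := g)).mp (fun c hc => ?_) d hd).symm
  rw [← hg c hc, ← Nat.sum_divisors_card_eq_card_dvd f p hc.ne', Nat.cast_sum]

theorem FiniteField.card_units_finrank_adjoin_dvd_and_pow_eq_one {K L : Type*} [Field K]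
    [Finite K] [Field L] [Finite L] [Algebra K L] (c : ℕ) {m : ℕ} (hm : m ∣ Nat.card Lˣ) :
    Nat.card {β : Lˣ // Module.finrank K K⟮(β : L)⟯ ∣ c ∧ β ^ m = 1} =
      (Nat.card K ^ c - 1).gcd m := by
  have key (β : Lˣ) :
      (Module.finrank K K⟮(β : L)⟯ ∣ c ∧ β ^ m = 1) ↔ β ^ (Nat.card K ^ c - 1).gcd m = 1 := by
    rw [pow_gcd_eq_one, Units.pow_sub_one_eq_one_iff _ (Nat.one_le_pow _ _ Nat.card_pos),
      finrank_adjoin_simple_dvd_iff (Algebra.IsIntegral.isIntegral _)]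
  rw [Nat.card_congr (Equiv.subtypeEquivRight key), IsCyclic.card_pow_eq_one,
    Nat.gcd_eq_right ((Nat.gcd_dvd_right _ _).trans hm)]

theorem count_degree_d_elements_in_subgroup_general
    (n d b : ℕ) (K L : Type) [Field K] [Fintype K] [Field L] [Fintype L]
    [Algebra K L] (hdim : Module.finrank K L = n) (hd : d ∣ n)
    (hbdvd : b ∣ Fintype.card K ^ n - 1) :
    (Nat.card {β : Lˣ //
        Module.finrank K (IntermediateField.adjoin K {(β : L)}) = d ∧
        β ^ ((Fintype.card K ^ n - 1) / b) = 1} : ℚ)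
      = ∑ c ∈ d.divisors,
          ((ArithmeticFunction.moebius (d / c)) : ℚ) * ((Fintype.card K ^ n - 1 : ℕ) : ℚ) /
            ((Nat.lcm ((Fintype.card K ^ n - 1) / (Fintype.card K ^ c - 1)) b : ℕ) : ℚ) := by
  rw [← Nat.card_eq_fintype_card] at hbdvd ⊢
  set N := Nat.card K ^ n - 1
  have hcard : Nat.card Lˣ = N := by
    rw [Nat.card_units, Module.natCard_eq_pow_finrank (K := K), hdim]
  have hN : N ≠ 0 := hcard ▸ Nat.card_pos.ne'
  have hd0 : 0 < d := Nat.pos_of_dvd_of_pos hd (hdim ▸ Module.finrank_pos)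
  have hNb : N / b ∣ Nat.card Lˣ := hcard.symm ▸ Nat.div_dvd_of_dvd hbdvd
  rw [card_eq_sum_moebius_of_card_dvd_eq _ _ (fun c => ((Nat.card K ^ c - 1).gcd (N / b) : ℚ))
    (fun c _ => congrArg _ (FiniteField.card_units_finrank_adjoin_dvd_and_pow_eq_one c hNb)) hd0]
  refine Finset.sum_congr rfl fun c hc => ?_
  have hprod := Nat.gcd_div_mul_lcm_div (N := N)
    (Nat.pow_sub_one_dvd_pow_sub_one _ ((Nat.dvd_of_mem_divisors hc).trans hd)) hbdvd
  have hlcm : ((N / (Nat.card K ^ c - 1)).lcm b : ℚ) ≠ 0 := by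
    exact_mod_cast right_ne_zero_of_mul (hprod ▸ hN)
  rw [mul_div_assoc]
  congr 1
  rw [eq_div_iff hlcm]
  exact_mod_cast hprod

/-- Lemma 4.7 of the paper (element-level form): for a finite field `K` with `q` elements, a
degree-`n` extension `L/K`, a divisor `d` of `n` and a positive divisor `b` of `q^n - 1`,
the number of `β ∈ Lˣ` with `[K(β):K] = d` lying in the subgroup of index `b` of `Lˣ` is
`Σ_{c ∣ d} μ̂(d/c)·(q^n - 1)/lcm((q^n - 1)/(q^c - 1), b)`. -/
theorem count_degree_d_elements_in_subgroup
    (n d b : ℕ) (hn : 1 ≤ n) (K L : Type) [Field K] [Fintype K] [Field L] [Fintype L]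
    [Algebra K L] (hdim : Module.finrank K L = n) (hd : d ∣ n)
    (hb : 0 < b) (hbdvd : b ∣ Fintype.card K ^ n - 1) :
    (Nat.card {β : Lˣ //
        Module.finrank K (IntermediateField.adjoin K {(β : L)}) = d ∧
        β ^ ((Fintype.card K ^ n - 1) / b) = 1} : ℚ)
      = ∑ c ∈ d.divisors,
          ((ArithmeticFunction.moebius (d / c)) : ℚ) * ((Fintype.card K ^ n - 1 : ℕ) : ℚ) /
            ((Nat.lcm ((Fintype.card K ^ n - 1) / (Fintype.card K ^ c - 1)) b : ℕ) : ℚ) :=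
  count_degree_d_elements_in_subgroup_general n d b K L hdim hd hbdvd
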